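/- arXiv:2509.20301 — 7 statements merged into one kernel-verified Lean document; each statement's English description precedes it below -/
import Mathlib

section
/- Let c ∈ ℝ^n, b ∈ ℝ^n, let G be a real n×p matrix and H a real n×q matrix. Suppose there exist a q×p matrix Γ and a vector β ∈ ℝ^q such that H·Γ = G, b − c = H·β, and for every row index i one has (Σⱼ |Γᵢⱼ|) + |βᵢ| ≤ 1. Then the zonotope Z(c,G) is contained in the zonotope Z(b,H), i.e., for every λ ∈ ℝ^p with ‖λ‖∞ ≤ 1 there exists μ ∈ ℝ^q with ‖μ‖∞ ≤ 1 such that c + G·λ = b + H·μ. -/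
/-!
The witness sends the generator coefficients `λ` of a point of `Z(c,G)` to `μ = Γλ - β`.
Then `H μ = G λ - (b - c)`, so the two parametrizations give the same point, and the row
condition on `[Γ | β]` bounds each `|μᵢ|` by `∑ⱼ |Γᵢⱼ| + |βᵢ| ≤ 1`.
-/

open Matrix

lemma Matrix.abs_mulVec_apply_le_of_norm_le_one {m k : Type*} [Fintype k]
    (A : Matrix m k ℝ) {x : k → ℝ} (hx : ‖x‖ ≤ 1) (i : m) :
    |(A *ᵥ x) i| ≤ ∑ j, |A i j| := by
  calc |(A *ᵥ x) i| = |∑ j, A i j * x j| := rfl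
    _ ≤ ∑ j, |A i j * x j| := Finset.abs_sum_le_sum_abs _ _
    _ ≤ ∑ j, |A i j| := by
      refine Finset.sum_le_sum fun j _ => ?_
      rw [abs_mul]
      exact mul_le_of_le_one_right (abs_nonneg _) ((norm_le_pi_norm x j).trans hx)

lemma Matrix.norm_mulVec_sub_le_one {m k : Type*} [Fintype m] [Fintype k]
    (A : Matrix m k ℝ) (v : m → ℝ) (hrow : ∀ i, (∑ j, |A i j|) + |v i| ≤ 1)
    {x : k → ℝ} (hx : ‖x‖ ≤ 1) :
    ‖A *ᵥ x - v‖ ≤ 1 := by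
  refine (pi_norm_le_iff_of_nonneg zero_le_one).2 fun i => ?_
  calc ‖(A *ᵥ x - v) i‖ = |(A *ᵥ x) i - v i| := rfl
    _ ≤ |(A *ᵥ x) i| + |v i| := abs_sub _ _
    _ ≤ (∑ j, |A i j|) + |v i| := by gcongr; exact A.abs_mulVec_apply_le_of_norm_le_one hx i
    _ ≤ 1 := hrow i

lemma Matrix.add_mulVec_eq_add_mulVec_mulVec_sub {R m k l : Type*} [CommRing R]
    [Fintype k] [Fintype l] {c b : m → R} {G : Matrix m k R} {H : Matrix m l R}
    {Γ : Matrix l k R} {β : l → R} (hG : H * Γ = G) (hb : b - c = H *ᵥ β) (x : k → R) :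
    c + G *ᵥ x = b + H *ᵥ (Γ *ᵥ x - β) := by
  rw [mulVec_sub, mulVec_mulVec, hG, ← hb]
  abel

/-- Zonotope containment via an exact witness (Γ, β):
if H·Γ = G, b − c = H·β, and every row of [Γ | β] has absolute sum at most 1,
then Z(c,G) ⊆ Z(b,H). -/
theorem zonotope_containment_exact_witness
    {n p q : ℕ} (c b : Fin n → ℝ)
    (G : Matrix (Fin n) (Fin p) ℝ) (H : Matrix (Fin n) (Fin q) ℝ)
    (Γ : Matrix (Fin q) (Fin p) ℝ) (β : Fin q → ℝ)
    (hG : H * Γ = G)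
    (hb : b - c = H.mulVec β)
    (hrow : ∀ i : Fin q, (∑ j, |Γ i j|) + |β i| ≤ 1) :
    ∀ lam : Fin p → ℝ, ‖lam‖ ≤ 1 →
      ∃ μ : Fin q → ℝ, ‖μ‖ ≤ 1 ∧ c + G.mulVec lam = b + H.mulVec μ :=
  fun lam hlam => ⟨Γ *ᵥ lam - β, Γ.norm_mulVec_sub_le_one β hrow hlam,
    add_mulVec_eq_add_mulVec_mulVec_sub hG hb lam⟩
end

section
/- Let c, b ∈ ℝ^n, let G be a real n×p matrix and H a real n×q matrix, and let ε ≥ 0. Suppose there exist a q×n matrix H⁺ with H·H⁺ = I_n (the n×n identity), a q×p matrix Γ, and a vector β ∈ ℝ^q satisfying: (i) b − c = H·β; (ii) ‖H·Γ − G‖∞ ≤ ε; (iii) for every row index i, (Σⱼ |Γᵢⱼ|) + |βᵢ| ≤ 1 − ε·‖H⁺‖∞. Then the zonotope Z(c,G) is contained in the zonotope Z(b,H): for every λ ∈ ℝ^p with ‖λ‖∞ ≤ 1 there exists μ ∈ ℝ^q with ‖μ‖∞ ≤ 1 such that c + G·λ = b + H·μ. -/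
/-! The witness is `μ = Γ λ - β + H⁺ (G - H Γ) λ`: the term `H⁺ (G - H Γ) λ` corrects the
error of the approximate factorisation `G ≈ H Γ` exactly, because `H H⁺ = 1`, and its size
is at most `‖H⁺‖∞ ε`, which is the slack left in each row of `[Γ | β]`. -/

/-- The infinity operator norm of a real matrix: the maximum over rows of the
sum of absolute values of the entries in that row. -/
noncomputable def matInfNorm {a b : ℕ} (A : Matrix (Fin a) (Fin b) ℝ) : ℝ :=
  ⨆ i : Fin a, ∑ j, |A i j|

open Matrix

theorem abs_mulVec_apply_le {m n : Type*} [Fintype n] (A : Matrix m n ℝ) (v : n → ℝ) (i : m) :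
    |(A *ᵥ v) i| ≤ (∑ j, |A i j|) * ‖v‖ := by
  rw [mulVec, dotProduct, Finset.sum_mul]
  refine (Finset.abs_sum_le_sum_abs _ _).trans (Finset.sum_le_sum fun j _ => ?_)
  rw [abs_mul, ← Real.norm_eq_abs (v j)]
  exact mul_le_mul_of_nonneg_left (norm_le_pi_norm v j) (abs_nonneg _)

section LinftyOpNorm

attribute [local instance] Matrix.linftyOpNormedAddCommGroup

theorem matInfNorm_eq_linfty_opNorm {a b : ℕ} (A : Matrix (Fin a) (Fin b) ℝ) :
    matInfNorm A = ‖A‖ := by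
  rw [Matrix.linfty_opNorm_def, Finset.sup_univ_eq_ciSup, NNReal.coe_iSup]
  simp [matInfNorm, Real.norm_eq_abs]

theorem matInfNorm_nonneg {a b : ℕ} (A : Matrix (Fin a) (Fin b) ℝ) : 0 ≤ matInfNorm A :=
  matInfNorm_eq_linfty_opNorm A ▸ norm_nonneg A

theorem matInfNorm_sub_comm {a b : ℕ} (A B : Matrix (Fin a) (Fin b) ℝ) :
    matInfNorm (A - B) = matInfNorm (B - A) := by
  simp only [matInfNorm_eq_linfty_opNorm, norm_sub_rev]

theorem norm_mulVec_le_matInfNorm_mul {a b : ℕ} (A : Matrix (Fin a) (Fin b) ℝ) (v : Fin b → ℝ) :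
    ‖A *ᵥ v‖ ≤ matInfNorm A * ‖v‖ :=
  matInfNorm_eq_linfty_opNorm A ▸ Matrix.linfty_opNorm_mulVec A v

end LinftyOpNorm

theorem zonotope_containment_relaxed_witness_general
    {n p q : ℕ} (c b : Fin n → ℝ)
    (G : Matrix (Fin n) (Fin p) ℝ) (H : Matrix (Fin n) (Fin q) ℝ)
    (ε : ℝ)
    (Hplus : Matrix (Fin q) (Fin n) ℝ) (Γ : Matrix (Fin q) (Fin p) ℝ) (β : Fin q → ℝ)
    (hinv : H * Hplus = 1)
    (hb : b - c = H.mulVec β)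
    (hpert : matInfNorm (H * Γ - G) ≤ ε)
    (hrow : ∀ i : Fin q, (∑ j, |Γ i j|) + |β i| ≤ 1 - ε * matInfNorm Hplus) :
    ∀ lam : Fin p → ℝ, ‖lam‖ ≤ 1 →
      ∃ μ : Fin q → ℝ, ‖μ‖ ≤ 1 ∧ c + G.mulVec lam = b + H.mulVec μ := by
  intro lam hlam
  set v := (G - H * Γ) *ᵥ lam with hv_def
  have hv : ‖v‖ ≤ ε := calc
    ‖v‖ ≤ matInfNorm (G - H * Γ) * ‖lam‖ := norm_mulVec_le_matInfNorm_mul _ _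
    _ ≤ matInfNorm (H * Γ - G) := by
      rw [matInfNorm_sub_comm]; exact mul_le_of_le_one_right (matInfNorm_nonneg _) hlam
    _ ≤ ε := hpert
  have hcorr : ‖Hplus *ᵥ v‖ ≤ ε * matInfNorm Hplus := calc
    ‖Hplus *ᵥ v‖ ≤ matInfNorm Hplus * ‖v‖ := norm_mulVec_le_matInfNorm_mul _ _
    _ ≤ ε * matInfNorm Hplus := by rw [mul_comm]; gcongr; exact matInfNorm_nonneg _
  refine ⟨Γ *ᵥ lam - β + Hplus *ᵥ v, (pi_norm_le_iff_of_nonneg zero_le_one).2 fun i => ?_, ?_⟩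
  · have hΓ : |(Γ *ᵥ lam) i| ≤ ∑ j, |Γ i j| :=
      (abs_mulVec_apply_le Γ lam i).trans (mul_le_of_le_one_right (by positivity) hlam)
    have hH : |(Hplus *ᵥ v) i| ≤ ε * matInfNorm Hplus := (norm_le_pi_norm _ i).trans hcorr
    calc ‖(Γ *ᵥ lam - β + Hplus *ᵥ v) i‖
        ≤ |(Γ *ᵥ lam) i| + |β i| + |(Hplus *ᵥ v) i| := (abs_add_le _ _).trans
          (add_le_add_left (abs_sub _ _) _)
      _ ≤ 1 := by linarith [hrow i]
  · have hHv : H *ᵥ (Hplus *ᵥ v) = v := by rw [mulVec_mulVec, hinv, one_mulVec]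
    rw [mulVec_add, mulVec_sub, hHv, mulVec_mulVec, ← hb, hv_def, sub_mulVec]
    abel

/-- Zonotope containment via a relaxed (perturbed) witness: if H has right inverse H⁺,
b − c = H·β, ‖H·Γ − G‖∞ ≤ ε and every row of [Γ | β] has absolute sum at most
1 − ε·‖H⁺‖∞, then Z(c,G) ⊆ Z(b,H). -/
theorem zonotope_containment_relaxed_witness
    {n p q : ℕ} (c b : Fin n → ℝ)
    (G : Matrix (Fin n) (Fin p) ℝ) (H : Matrix (Fin n) (Fin q) ℝ)
    (ε : ℝ) (hε : 0 ≤ ε)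
    (Hplus : Matrix (Fin q) (Fin n) ℝ) (Γ : Matrix (Fin q) (Fin p) ℝ) (β : Fin q → ℝ)
    (hinv : H * Hplus = 1)
    (hb : b - c = H.mulVec β)
    (hpert : matInfNorm (H * Γ - G) ≤ ε)
    (hrow : ∀ i : Fin q, (∑ j, |Γ i j|) + |β i| ≤ 1 - ε * matInfNorm Hplus) :
    ∀ lam : Fin p → ℝ, ‖lam‖ ≤ 1 →
      ∃ μ : Fin q → ℝ, ‖μ‖ ≤ 1 ∧ c + G.mulVec lam = b + H.mulVec μ :=
  zonotope_containment_relaxed_witness_general c b G H ε Hplus Γ β hinv hb hpert hrow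
end

section
/- Let T ≥ 0 and let g : ℝ → ℝ be differentiable on [0,T]. Suppose g(0) ≥ 0 and, for every t ∈ [0,T], g(t) ≥ 0 implies g′(t) > 0. Then g(t) ≥ 0 for all t ∈ [0,T]. -/
open Set

/- The fencing theorem with the roles reversed: the constant `0` is the function kept below the
barrier `g`, which it can only cross at a zero of `g`. -/
theorem nonneg_of_hasDerivWithinAt_pos_of_eq_zero {g g' : ℝ → ℝ} {a b : ℝ}
    (hg : ∀ t ∈ Icc a b, HasDerivWithinAt g (g' t) (Icc a b) t) (ha : 0 ≤ g a)
    (hpos : ∀ t ∈ Ico a b, g t = 0 → 0 < g' t) : ∀ t ∈ Icc a b, 0 ≤ g t := by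
  have hg_right : ∀ t ∈ Ico a b, HasDerivWithinAt g (g' t) (Ici t) t := fun t ht ↦
    (hg t (Ico_subset_Icc_self ht)).mono_of_mem_nhdsWithin (Icc_mem_nhdsGE_of_mem ht)
  exact fun t ht ↦ image_le_of_deriv_right_lt_deriv_boundary' continuousOn_const
    (fun _ _ ↦ hasDerivWithinAt_const _ _ 0) ha (fun s hs ↦ (hg s hs).continuousWithinAt)
    hg_right (fun s hs hgs ↦ hpos s hs hgs.symm) ht

theorem closed_differential_induction_general
    (T : ℝ) (g g' : ℝ → ℝ)
    (hg : ∀ t ∈ Set.Icc (0 : ℝ) T, HasDerivWithinAt g (g' t) (Set.Icc (0 : ℝ) T) t)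
    (h0 : 0 ≤ g 0)
    (hind : ∀ t ∈ Set.Icc (0 : ℝ) T, 0 ≤ g t → 0 < g' t) :
    ∀ t ∈ Set.Icc (0 : ℝ) T, 0 ≤ g t :=
  nonneg_of_hasDerivWithinAt_pos_of_eq_zero hg h0 fun t ht hgt ↦
    hind t (Ico_subset_Icc_self ht) hgt.ge

/-- Closed differential induction (scalar): if g(0) ≥ 0 and g′(t) > 0 whenever
g(t) ≥ 0 on [0,T], then g(t) ≥ 0 on all of [0,T]. -/
theorem closed_differential_induction
    (T : ℝ) (hT : 0 ≤ T) (g g' : ℝ → ℝ)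
    (hg : ∀ t ∈ Set.Icc (0 : ℝ) T, HasDerivWithinAt g (g' t) (Set.Icc (0 : ℝ) T) t)
    (h0 : 0 ≤ g 0)
    (hind : ∀ t ∈ Set.Icc (0 : ℝ) T, 0 ≤ g t → 0 < g' t) :
    ∀ t ∈ Set.Icc (0 : ℝ) T, 0 ≤ g t :=
  closed_differential_induction_general T g g' hg h0 hind
end

section
/- Let T ≥ 0 and let g, L, U : ℝ → ℝ^n be differentiable on [0,T]. Suppose Lᵢ(0) ≤ gᵢ(0) ≤ Uᵢ(0) for all i, and for every t ∈ [0,T], if Lᵢ(t) ≤ gᵢ(t) ≤ Uᵢ(t) for all i, then Lᵢ′(t) < gᵢ′(t) < Uᵢ′(t) for all i. Then for every t ∈ [0,T] and every i, Lᵢ(t) ≤ gᵢ(t) ≤ Uᵢ(t). -/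
/-!
The set of times at which `g` lies in the box is closed in `[0, T]`, because all three curves
are continuous. It is also open to the right: at a time `x` where `g x` is in the box, the
gaps `gᵢ - Lᵢ` and `Uᵢ - gᵢ` are nonnegative and have positive right derivative, so they stay
nonnegative just after `x`. Real induction on `[0, T]` then gives the whole interval.
-/

open Set Filter Topology

theorem IsClosed.isClosed_mem_Icc {α β : Type*} [TopologicalSpace α] [Preorder β]
    [TopologicalSpace β] [OrderClosedTopology β] {s : Set α} {f l u : α → β} (hs : IsClosed s)
    (hf : ContinuousOn f s) (hl : ContinuousOn l s) (hu : ContinuousOn u s) :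
    IsClosed {x ∈ s | f x ∈ Icc (l x) (u x)} := by
  convert (hs.isClosed_le hl hf).inter (hs.isClosed_le hf hu) using 1
  ext x
  simp only [mem_sep_iff, mem_Icc, mem_inter_iff]
  tauto

theorem HasDerivWithinAt.eventually_lt_of_deriv_pos {f : ℝ → ℝ} {f' x : ℝ} {s : Set ℝ}
    (hf : HasDerivWithinAt f f' s x) (hs : s ∈ 𝓝[>] x) (hf' : 0 < f') :
    ∀ᶠ t in 𝓝[>] x, f x < f t := by
  have hslope : Tendsto (slope f x) (𝓝[>] x) (𝓝 f') :=
    (hasDerivWithinAt_iff_tendsto_slope' self_notMem_Ioi).1 (hf.mono_of_mem_nhdsWithin hs)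
  filter_upwards [hslope.eventually (eventually_gt_nhds hf'), self_mem_nhdsWithin]
    with t hpos (hxt : x < t)
  rw [slope_def_field, div_pos_iff_of_pos_right (sub_pos.2 hxt)] at hpos
  exact sub_pos.1 hpos

theorem HasDerivWithinAt.eventually_mem_Icc {ι : Type*} [Finite ι] {g L U : ℝ → ι → ℝ}
    {g' L' U' : ι → ℝ} {s : Set ℝ} {x : ℝ} (hg : HasDerivWithinAt g g' s x)
    (hL : HasDerivWithinAt L L' s x) (hU : HasDerivWithinAt U U' s x) (hs : s ∈ 𝓝[>] x)
    (hx : g x ∈ Icc (L x) (U x)) (hderiv : ∀ i, L' i < g' i ∧ g' i < U' i) :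
    ∀ᶠ t in 𝓝[>] x, g t ∈ Icc (L t) (U t) := by
  simp only [mem_Icc, Pi.le_def, ← forall_and] at hx ⊢
  refine eventually_all.2 fun i ↦ ?_
  have hgi := hasDerivWithinAt_pi.1 hg i
  have hlower := ((hgi.sub (hasDerivWithinAt_pi.1 hL i)).eventually_lt_of_deriv_pos hs
    (sub_pos.2 (hderiv i).1))
  have hupper := (((hasDerivWithinAt_pi.1 hU i).sub hgi).eventually_lt_of_deriv_pos hs
    (sub_pos.2 (hderiv i).2))
  filter_upwards [hlower, hupper] with t hlt hut
  simp only [Pi.sub_apply] at hlt hut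
  constructor <;> linarith [hx i]

theorem box_invariance_general
    {n : ℕ} (T : ℝ)
    (g L U g' L' U' : ℝ → Fin n → ℝ)
    (hg : ∀ t ∈ Set.Icc (0 : ℝ) T, HasDerivWithinAt g (g' t) (Set.Icc (0 : ℝ) T) t)
    (hL : ∀ t ∈ Set.Icc (0 : ℝ) T, HasDerivWithinAt L (L' t) (Set.Icc (0 : ℝ) T) t)
    (hU : ∀ t ∈ Set.Icc (0 : ℝ) T, HasDerivWithinAt U (U' t) (Set.Icc (0 : ℝ) T) t)
    (h0 : ∀ i, L 0 i ≤ g 0 i ∧ g 0 i ≤ U 0 i)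
    (hind : ∀ t ∈ Set.Icc (0 : ℝ) T,
      (∀ i, L t i ≤ g t i ∧ g t i ≤ U t i) →
      ∀ i, L' t i < g' t i ∧ g' t i < U' t i) :
    ∀ t ∈ Set.Icc (0 : ℝ) T, ∀ i, L t i ≤ g t i ∧ g t i ≤ U t i := by
  have hbox (t : ℝ) : g t ∈ Icc (L t) (U t) ↔ ∀ i, L t i ≤ g t i ∧ g t i ≤ U t i := by
    simp only [mem_Icc, Pi.le_def, forall_and]
  have hclosed : IsClosed ({t | g t ∈ Icc (L t) (U t)} ∩ Icc 0 T) := by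
    rw [inter_comm]
    exact isClosed_Icc.isClosed_mem_Icc (fun t ht ↦ (hg t ht).continuousWithinAt)
      (fun t ht ↦ (hL t ht).continuousWithinAt) (fun t ht ↦ (hU t ht).continuousWithinAt)
  have hinvariant : Icc 0 T ⊆ {t | g t ∈ Icc (L t) (U t)} := by
    refine hclosed.Icc_subset_of_forall_mem_nhdsWithin ((hbox 0).2 h0) ?_
    rintro x ⟨hxbox, hx⟩
    have hxI := Ico_subset_Icc_self hx
    exact (hg x hxI).eventually_mem_Icc (hL x hxI) (hU x hxI) (Icc_mem_nhdsGT_of_mem hx) hxbox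
      (hind x hxI ((hbox x).1 hxbox))
  exact fun t ht ↦ (hbox t).1 (hinvariant ht)

/-- Vector-valued box invariance: a differentiable curve g that starts inside the
moving box [L(t),U(t)] and whose componentwise derivatives lie strictly between the
derivatives of the box bounds whenever g is inside the box, remains inside the box. -/
theorem box_invariance
    {n : ℕ} (T : ℝ) (hT : 0 ≤ T)
    (g L U g' L' U' : ℝ → Fin n → ℝ)
    (hg : ∀ t ∈ Set.Icc (0 : ℝ) T, HasDerivWithinAt g (g' t) (Set.Icc (0 : ℝ) T) t)
    (hL : ∀ t ∈ Set.Icc (0 : ℝ) T, HasDerivWithinAt L (L' t) (Set.Icc (0 : ℝ) T) t)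
    (hU : ∀ t ∈ Set.Icc (0 : ℝ) T, HasDerivWithinAt U (U' t) (Set.Icc (0 : ℝ) T) t)
    (h0 : ∀ i, L 0 i ≤ g 0 i ∧ g 0 i ≤ U 0 i)
    (hind : ∀ t ∈ Set.Icc (0 : ℝ) T,
      (∀ i, L t i ≤ g t i ∧ g t i ≤ U t i) →
      ∀ i, L' t i < g' t i ∧ g' t i < U' t i) :
    ∀ t ∈ Set.Icc (0 : ℝ) T, ∀ i, L t i ≤ g t i ∧ g t i ≤ U t i :=
  box_invariance_general T g L U g' L' U' hg hL hU h0 hind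
end

section
/- Let Δt ≥ 0, let f : ℝ^n → ℝ^n, and let p, I⁻, I⁺ : ℝ → ℝ^n be differentiable on [0,Δt]. Let x : ℝ → ℝ^n be differentiable on [0,Δt] with x′(t) = f(x(t)) for all t ∈ [0,Δt]. Suppose (i) I⁻(0) ≤ x(0) − p(0) ≤ I⁺(0) componentwise, and (ii) for every t ∈ [0,Δt], if I⁻(t) ≤ x(t) − p(t) ≤ I⁺(t) componentwise then (I⁻)′ᵢ(t) < fᵢ(x(t)) − p′ᵢ(t) < (I⁺)′ᵢ(t) for all i. Then for every t ∈ [0,Δt], I⁻(t) ≤ x(t) − p(t) ≤ I⁺(t) componentwise. -/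
/-!
Continuous induction on `[0, Δt]`: the set of times at which `x - p` lies in the box
`[I⁻, I⁺]` contains `0` and is closed in `[0, Δt]`, and at each of its points the strict
inequalities on the derivatives push every face of the box away from `x - p` for a short while,
so it also contains a right neighbourhood of each such point.
-/

open Set Filter Topology

theorem HasDerivWithinAt.eventually_lt_nhdsGT {g : ℝ → ℝ} {g' x : ℝ} {s : Set ℝ}
    (h : HasDerivWithinAt g g' s x) (hs : s ∈ 𝓝[>] x) (hg' : 0 < g') :
    ∀ᶠ y in 𝓝[>] x, g x < g y := by
  have hslope : Tendsto (slope g x) (𝓝[>] x) (𝓝 g') :=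
    (hasDerivWithinAt_iff_tendsto_slope' (lt_irrefl x)).1 (h.mono_of_mem_nhdsWithin hs)
  filter_upwards [hslope.eventually (eventually_gt_nhds hg'), self_mem_nhdsWithin]
    with y hy hxy
  exact (slope_pos_iff hxy).1 hy

theorem image_mem_Icc_of_deriv_mem_Ioo {ι : Type*} [Fintype ι] {a b : ℝ}
    {e lo hi e' lo' hi' : ℝ → ι → ℝ}
    (he : ∀ t ∈ Icc a b, HasDerivWithinAt e (e' t) (Icc a b) t)
    (hlo : ∀ t ∈ Icc a b, HasDerivWithinAt lo (lo' t) (Icc a b) t)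
    (hhi : ∀ t ∈ Icc a b, HasDerivWithinAt hi (hi' t) (Icc a b) t)
    (ha : e a ∈ Icc (lo a) (hi a))
    (hstep : ∀ t ∈ Ico a b, e t ∈ Icc (lo t) (hi t) → ∀ i, e' t i ∈ Ioo (lo' t i) (hi' t i)) :
    ∀ t ∈ Icc a b, e t ∈ Icc (lo t) (hi t) := by
  have hcont {F F' : ℝ → ι → ℝ} (hF : ∀ t ∈ Icc a b, HasDerivWithinAt F (F' t) (Icc a b) t) :
      ContinuousOn F (Icc a b) := fun t ht => (hF t ht).continuousWithinAt
  have hclosed : IsClosed ({t | e t ∈ Icc (lo t) (hi t)} ∩ Icc a b) := by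
    convert (isClosed_Icc.isClosed_le (hcont hlo) (hcont he)).inter
      (isClosed_Icc.isClosed_le (hcont he) (hcont hhi)) using 1
    ext t
    simp only [mem_inter_iff, mem_ofPred_eq, mem_Icc]
    tauto
  refine fun t ht => hclosed.Icc_subset_of_forall_mem_nhdsWithin ha ?_ ht
  rintro s ⟨hbox, hs⟩
  have hnhds : Icc a b ∈ 𝓝[>] s := Icc_mem_nhdsGT_of_mem hs
  have hcomp {F F' : ℝ → ι → ℝ} (hF : ∀ t ∈ Icc a b, HasDerivWithinAt F (F' t) (Icc a b) t)
      (i : ι) : HasDerivWithinAt (fun u => F u i) (F' s i) (Icc a b) s :=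
    hasDerivWithinAt_pi.1 (hF s (Ico_subset_Icc_self hs)) i
  have hfaces : ∀ i, ∀ᶠ y in 𝓝[>] s, lo y i ≤ e y i ∧ e y i ≤ hi y i := by
    intro i
    obtain ⟨hlo', hhi'⟩ := hstep s hs hbox i
    have above := ((hcomp he i).sub (hcomp hlo i)).eventually_lt_nhdsGT hnhds (sub_pos.2 hlo')
    have below := ((hcomp hhi i).sub (hcomp he i)).eventually_lt_nhdsGT hnhds (sub_pos.2 hhi')
    filter_upwards [above, below] with y hy₁ hy₂
    simp only [Pi.sub_apply] at hy₁ hy₂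
    exact ⟨by linarith [hbox.1 i], by linarith [hbox.2 i]⟩
  filter_upwards [eventually_all.2 hfaces] with y hy
  exact ⟨fun i => (hy i).1, fun i => (hy i).2⟩

theorem taylor_model_validity_general
    {n : ℕ} (Δt : ℝ)
    (f : (Fin n → ℝ) → (Fin n → ℝ))
    (p Ilo Ihi p' Ilo' Ihi' : ℝ → Fin n → ℝ)
    (hp : ∀ t ∈ Set.Icc (0 : ℝ) Δt, HasDerivWithinAt p (p' t) (Set.Icc (0 : ℝ) Δt) t)
    (hIlo : ∀ t ∈ Set.Icc (0 : ℝ) Δt, HasDerivWithinAt Ilo (Ilo' t) (Set.Icc (0 : ℝ) Δt) t)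
    (hIhi : ∀ t ∈ Set.Icc (0 : ℝ) Δt, HasDerivWithinAt Ihi (Ihi' t) (Set.Icc (0 : ℝ) Δt) t)
    (x : ℝ → Fin n → ℝ)
    (hx : ∀ t ∈ Set.Icc (0 : ℝ) Δt, HasDerivWithinAt x (f (x t)) (Set.Icc (0 : ℝ) Δt) t)
    (h0 : ∀ i, Ilo 0 i ≤ x 0 i - p 0 i ∧ x 0 i - p 0 i ≤ Ihi 0 i)
    (hind : ∀ t ∈ Set.Icc (0 : ℝ) Δt,
      (∀ i, Ilo t i ≤ x t i - p t i ∧ x t i - p t i ≤ Ihi t i) →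
      ∀ i, Ilo' t i < f (x t) i - p' t i ∧ f (x t) i - p' t i < Ihi' t i) :
    ∀ t ∈ Set.Icc (0 : ℝ) Δt, ∀ i, Ilo t i ≤ x t i - p t i ∧ x t i - p t i ≤ Ihi t i := by
  have hbox (t : ℝ) : (x - p) t ∈ Icc (Ilo t) (Ihi t) ↔
      ∀ i, Ilo t i ≤ x t i - p t i ∧ x t i - p t i ≤ Ihi t i := by
    simp only [mem_Icc, Pi.le_def, Pi.sub_apply, forall_and]
  have herr : ∀ t ∈ Icc (0 : ℝ) Δt,
      HasDerivWithinAt (x - p) (f (x t) - p' t) (Icc (0 : ℝ) Δt) t :=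
    fun t ht => (hx t ht).sub (hp t ht)
  intro t ht
  refine (hbox t).1 (image_mem_Icc_of_deriv_mem_Ioo herr hIlo hIhi ((hbox 0).2 h0) ?_ t ht)
  exact fun s hs hs_box => hind s (Ico_subset_Icc_self hs) ((hbox s).1 hs_box)

/-- Validity of Taylor models for ODE flows: if the error x(t) − p(t) starts in the
interval [I⁻(0), I⁺(0)] and, whenever it is inside [I⁻(t), I⁺(t)], its componentwise
derivative f(x(t)) − p′(t) lies strictly between the derivatives of the interval
bounds, then x(t) − p(t) stays inside [I⁻(t), I⁺(t)] on all of [0,Δt]. -/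
theorem taylor_model_validity
    {n : ℕ} (Δt : ℝ) (hΔt : 0 ≤ Δt)
    (f : (Fin n → ℝ) → (Fin n → ℝ))
    (p Ilo Ihi p' Ilo' Ihi' : ℝ → Fin n → ℝ)
    (hp : ∀ t ∈ Set.Icc (0 : ℝ) Δt, HasDerivWithinAt p (p' t) (Set.Icc (0 : ℝ) Δt) t)
    (hIlo : ∀ t ∈ Set.Icc (0 : ℝ) Δt, HasDerivWithinAt Ilo (Ilo' t) (Set.Icc (0 : ℝ) Δt) t)
    (hIhi : ∀ t ∈ Set.Icc (0 : ℝ) Δt, HasDerivWithinAt Ihi (Ihi' t) (Set.Icc (0 : ℝ) Δt) t)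
    (x : ℝ → Fin n → ℝ)
    (hx : ∀ t ∈ Set.Icc (0 : ℝ) Δt, HasDerivWithinAt x (f (x t)) (Set.Icc (0 : ℝ) Δt) t)
    (h0 : ∀ i, Ilo 0 i ≤ x 0 i - p 0 i ∧ x 0 i - p 0 i ≤ Ihi 0 i)
    (hind : ∀ t ∈ Set.Icc (0 : ℝ) Δt,
      (∀ i, Ilo t i ≤ x t i - p t i ∧ x t i - p t i ≤ Ihi t i) →
      ∀ i, Ilo' t i < f (x t) i - p' t i ∧ f (x t) i - p' t i < Ihi' t i) :
    ∀ t ∈ Set.Icc (0 : ℝ) Δt, ∀ i, Ilo t i ≤ x t i - p t i ∧ x t i - p t i ≤ Ihi t i :=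
  taylor_model_validity_general Δt f p Ilo Ihi p' Ilo' Ihi' hp hIlo hIhi x hx h0 hind
end

section
/- Let Δt ∈ ℝ, let p : ℝ × ℝ^k → ℝ^n be differentiable in its second argument at (Δt, 0) with Jacobian D_λ p(Δt,0) (an n×k matrix), let l, u ∈ ℝ^n with l ≤ u componentwise, and let R⁻, R⁺ ∈ ℝ^n be such that for every λ ∈ ℝ^k with ‖λ‖∞ ≤ 1, R⁻ ≤ p(Δt,λ) − p(Δt,0) − D_λ p(Δt,0)·λ ≤ R⁺ componentwise. Define b := p(Δt,0) + (l+u)/2 + (R⁻+R⁺)/2 and let H be the n×(k+2n) matrix [D_λ p(Δt,0) | ½·diag(u−l) | ½·diag(R⁺−R⁻)]. Then every y ∈ ℝ^n for which there exists λ with ‖λ‖∞ ≤ 1 and l ≤ y − p(Δt,λ) ≤ u componentwise satisfies y ∈ Z(b,H), i.e., there exists μ ∈ ℝ^{k+2n} with ‖μ‖∞ ≤ 1 and y = b + H·μ. -/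
/-!
Each uncertain quantity that is known to lie in an interval `[m, M]` is the midpoint plus a
multiple `t` of the radius `(M - m) / 2` with `|t| ≤ 1`. Linearizing at `λ = 0`,
`y = p(Δt,0) + D λ + r + e` where the remainder `r` lies in `[R⁻, R⁺]` and the error `e` in
`[l, u]`; normalizing `r` and `e` this way gives the coefficients of the two diagonal blocks
of `H`, while `λ` itself serves as the coefficient of the block `D`.
-/

open Matrix

lemma exists_abs_le_one_eq_midpoint_add_mul_radius {m M a : ℝ} (hm : m ≤ a) (hM : a ≤ M) :
    ∃ t : ℝ, |t| ≤ 1 ∧ a = (m + M) / 2 + t * ((M - m) / 2) := by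
  rcases eq_or_lt_of_le (hm.trans hM) with hmM | hmM
  · exact ⟨0, by simp, by subst hmM; linarith [le_antisymm hm hM]⟩
  · have hr : 0 < (M - m) / 2 := by linarith
    refine ⟨(a - (m + M) / 2) / ((M - m) / 2), ?_, by field_simp; ring⟩
    rw [abs_div, abs_of_pos hr, div_le_one hr, abs_le]
    constructor <;> linarith

lemma exists_norm_le_one_eq_midpoint_add_mul_radius {ι : Type*} [Fintype ι]
    {m M x : ι → ℝ} (hm : ∀ i, m i ≤ x i) (hM : ∀ i, x i ≤ M i) :
    ∃ t : ι → ℝ, ‖t‖ ≤ 1 ∧ ∀ i, x i = (m i + M i) / 2 + t i * ((M i - m i) / 2) := by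
  choose t ht hx using fun i => exists_abs_le_one_eq_midpoint_add_mul_radius (hm i) (hM i)
  exact ⟨t, (pi_norm_le_iff_of_nonneg zero_le_one).2 fun i => (Real.norm_eq_abs _).trans_le (ht i),
    hx⟩

lemma norm_sumElim_le {ι κ : Type*} [Fintype ι] [Fintype κ] {f : ι → ℝ} {g : κ → ℝ} {r : ℝ}
    (hr : 0 ≤ r) (hf : ‖f‖ ≤ r) (hg : ‖g‖ ≤ r) : ‖Sum.elim f g‖ ≤ r := by
  rw [pi_norm_le_iff_of_nonneg hr]
  rintro (i | j)
  · exact (norm_le_pi_norm f i).trans hf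
  · exact (norm_le_pi_norm g j).trans hg

theorem zonotope_reach_discrete_general
    {n k : ℕ} (Δt : ℝ)
    (p : ℝ → (Fin k → ℝ) → (Fin n → ℝ))
    (D : Matrix (Fin n) (Fin k) ℝ)
    (l u : Fin n → ℝ)
    (Rlo Rhi : Fin n → ℝ)
    (hR : ∀ lam : Fin k → ℝ, ‖lam‖ ≤ 1 →
      ∀ i, Rlo i ≤ p Δt lam i - p Δt 0 i - D.mulVec lam i ∧
           p Δt lam i - p Δt 0 i - D.mulVec lam i ≤ Rhi i)
    (b : Fin n → ℝ)
    (hb : b = fun i => p Δt 0 i + (l i + u i) / 2 + (Rlo i + Rhi i) / 2)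
    (H : Matrix (Fin n) (Fin k ⊕ (Fin n ⊕ Fin n)) ℝ)
    (hH : H = Matrix.of fun i j => Sum.elim (fun jk => D i jk)
      (Sum.elim (fun jn => if i = jn then (u i - l i) / 2 else 0)
                (fun jn => if i = jn then (Rhi i - Rlo i) / 2 else 0)) j) :
    ∀ y : Fin n → ℝ,
      (∃ lam : Fin k → ℝ, ‖lam‖ ≤ 1 ∧
        ∀ i, l i ≤ y i - p Δt lam i ∧ y i - p Δt lam i ≤ u i) →
      ∃ μ : (Fin k ⊕ (Fin n ⊕ Fin n)) → ℝ, ‖μ‖ ≤ 1 ∧ y = b + H.mulVec μ := by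
  rintro y ⟨lam, hlam, hy⟩
  obtain ⟨α, hα, hαy⟩ := exists_norm_le_one_eq_midpoint_add_mul_radius
    (fun i => (hy i).1) (fun i => (hy i).2)
  obtain ⟨β, hβ, hβR⟩ := exists_norm_le_one_eq_midpoint_add_mul_radius
    (fun i => (hR lam hlam i).1) (fun i => (hR lam hlam i).2)
  have hH_blocks : H = fromCols D (fromCols (diagonal fun i => (u i - l i) / 2)
      (diagonal fun i => (Rhi i - Rlo i) / 2)) := by
    rw [hH]; rfl
  refine ⟨Sum.elim lam (Sum.elim α β),
    norm_sumElim_le zero_le_one hlam (norm_sumElim_le zero_le_one hα hβ), ?_⟩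
  funext i
  rw [hH_blocks, fromCols_mulVec_sumElim, fromCols_mulVec_sumElim, hb]
  simp only [Pi.add_apply, mulVec_diagonal]
  linarith [hαy i, hβR i]

/-- Zonotope enclosure of the Taylor-model reachable set at the sampling instant Δt:
any point y with y − p(Δt,λ) in the error box [l,u] for some ‖λ‖∞ ≤ 1 lies in the
zonotope with center b = p(Δt,0) + mid[l,u] + mid[R⁻,R⁺] and generator matrix
H = [D_λp(Δt,0) | ½·diag(u−l) | ½·diag(R⁺−R⁻)]. -/
theorem zonotope_reach_discrete
    {n k : ℕ} (Δt : ℝ)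
    (p : ℝ → (Fin k → ℝ) → (Fin n → ℝ))
    (D : Matrix (Fin n) (Fin k) ℝ)
    (hD : HasFDerivAt (fun lam => p Δt lam)
      (Matrix.mulVecLin D).toContinuousLinearMap 0)
    (l u : Fin n → ℝ) (hlu : ∀ i, l i ≤ u i)
    (Rlo Rhi : Fin n → ℝ)
    (hR : ∀ lam : Fin k → ℝ, ‖lam‖ ≤ 1 →
      ∀ i, Rlo i ≤ p Δt lam i - p Δt 0 i - D.mulVec lam i ∧
           p Δt lam i - p Δt 0 i - D.mulVec lam i ≤ Rhi i)
    (b : Fin n → ℝ)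
    (hb : b = fun i => p Δt 0 i + (l i + u i) / 2 + (Rlo i + Rhi i) / 2)
    (H : Matrix (Fin n) (Fin k ⊕ (Fin n ⊕ Fin n)) ℝ)
    (hH : H = Matrix.of fun i j => Sum.elim (fun jk => D i jk)
      (Sum.elim (fun jn => if i = jn then (u i - l i) / 2 else 0)
                (fun jn => if i = jn then (Rhi i - Rlo i) / 2 else 0)) j) :
    ∀ y : Fin n → ℝ,
      (∃ lam : Fin k → ℝ, ‖lam‖ ≤ 1 ∧
        ∀ i, l i ≤ y i - p Δt lam i ∧ y i - p Δt lam i ≤ u i) →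
      ∃ μ : (Fin k ⊕ (Fin n ⊕ Fin n)) → ℝ, ‖μ‖ ≤ 1 ∧ y = b + H.mulVec μ :=
  zonotope_reach_discrete_general Δt p D l u Rlo Rhi hR b hb H hH
end

section
/- Let 0 < Δt ≤ 1 and let p : ℝ × ℝ^k → ℝ^n and m, r : ℝ → ℝ^n be given with p differentiable at (0,0) (partial time derivative ∂ₜp(0,0) ∈ ℝ^n and Jacobian in λ equal to D_λ p(0,0), an n×k matrix) and m differentiable at 0. Define the remainder function r̃(t,λ,ξ) := p(t,λ) + m(t) + ½·r(t)∘ξ − p(0,0) − m(0) − ∂ₜp(0,0)·t − m′(0)·t − D_λ p(0,0)·λ − ½·r(0)∘ξ, and suppose R⁻, R⁺ ∈ ℝ^n satisfy R⁻ ≤ r̃(t,λ,ξ) ≤ R⁺ componentwise for all t ∈ [0,Δt], λ ∈ ℝ^k with ‖λ‖∞ ≤ 1, and ξ ∈ ℝ^n with ‖ξ‖∞ ≤ 1. Define b := p(0,0) + m(0) + (R⁻+R⁺)/2 and let H be the n×(1+k+2n) matrix [∂ₜp(0,0) + m′(0) | D_λ p(0,0) | ½·diag(r(0)) | ½·diag(R⁺−R⁻)].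 Then for every t ∈ [0,Δt], every λ with ‖λ‖∞ ≤ 1, and every ξ with ‖ξ‖∞ ≤ 1, the point y := p(t,λ) + m(t) + ½·r(t)∘ξ lies in the zonotope Z(b,H). -/
/-! The point `p(t,λ) + m(t) + ½ r(t) ∘ ξ` is, by definition of the remainder, the linear
part `p(0,0) + m(0) + (∂ₜp + m′)(0) t + D_λp λ + ½ r(0) ∘ ξ` plus a remainder lying in the box
`[R⁻, R⁺]`. Since `|t| ≤ 1`, `‖λ‖∞ ≤ 1` and `‖ξ‖∞ ≤ 1`, each linear term is a point of the
zonotope spanned by its own coefficient; the box is the zonotope with centre `(R⁻ + R⁺)/2` and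
generators `½ diag(R⁺ − R⁻)`; and placing generator matrices side by side realises the Minkowski
sum of zonotopes. -/

open Matrix

def zonotope {ι κ : Type*} [Fintype κ] (b : ι → ℝ) (H : Matrix ι κ ℝ) : Set (ι → ℝ) :=
  {x | ∃ μ : κ → ℝ, ‖μ‖ ≤ 1 ∧ x = b + H *ᵥ μ}

section Zonotope

variable {ι κ κ' : Type*} [Fintype κ] [Fintype κ']

theorem add_mulVec_mem_zonotope (b : ι → ℝ) (H : Matrix ι κ ℝ) {μ : κ → ℝ} (hμ : ‖μ‖ ≤ 1) :
    b + H *ᵥ μ ∈ zonotope b H :=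
  ⟨μ, hμ, rfl⟩

theorem add_smul_mem_zonotope_replicateCol (b v : ι → ℝ) {t : ℝ} (ht : |t| ≤ 1) :
    b + t • v ∈ zonotope b (replicateCol Unit v) := by
  have hμ : ‖fun _ : Unit => t‖ ≤ 1 := by
    rw [pi_norm_le_iff_of_nonneg zero_le_one]
    exact fun _ => ht
  convert add_mulVec_mem_zonotope b _ hμ using 2
  ext i
  simp [mulVec, dotProduct, mul_comm]

theorem add_mem_zonotope_fromCols {b₁ b₂ x₁ x₂ : ι → ℝ} {H₁ : Matrix ι κ ℝ}
    {H₂ : Matrix ι κ' ℝ} (hx₁ : x₁ ∈ zonotope b₁ H₁) (hx₂ : x₂ ∈ zonotope b₂ H₂) :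
    x₁ + x₂ ∈ zonotope (b₁ + b₂) (fromCols H₁ H₂) := by
  obtain ⟨μ₁, hμ₁, rfl⟩ := hx₁
  obtain ⟨μ₂, hμ₂, rfl⟩ := hx₂
  have hμ : ‖Sum.elim μ₁ μ₂‖ ≤ 1 := by
    rw [pi_norm_le_iff_of_nonneg zero_le_one]
    rintro (j | j)
    · exact (norm_le_pi_norm μ₁ j).trans hμ₁
    · exact (norm_le_pi_norm μ₂ j).trans hμ₂
  refine ⟨Sum.elim μ₁ μ₂, hμ, ?_⟩
  rw [fromCols_mulVec_sumElim]
  abel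

theorem exists_abs_le_one_eq_mid_add_mul {lo hi s : ℝ} (hlo : lo ≤ s) (hhi : s ≤ hi) :
    ∃ η : ℝ, |η| ≤ 1 ∧ s = (lo + hi) / 2 + (hi - lo) / 2 * η := by
  rcases hlo.trans hhi |>.eq_or_lt with heq | hlt
  · exact ⟨0, by simp, by subst heq; linarith⟩
  · have hrad : 0 < (hi - lo) / 2 := by linarith
    refine ⟨(s - (lo + hi) / 2) / ((hi - lo) / 2), ?_, by field_simp; ring⟩
    rw [abs_div, abs_of_pos hrad, div_le_one hrad, abs_le]
    constructor <;> linarith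

theorem mem_zonotope_diagonal_of_mem_Icc [DecidableEq κ] {lo hi s : κ → ℝ}
    (hlo : lo ≤ s) (hhi : s ≤ hi) :
    s ∈ zonotope (fun i => (lo i + hi i) / 2) (diagonal fun i => (hi i - lo i) / 2) := by
  choose η hη hs using fun i => exists_abs_le_one_eq_mid_add_mul (hlo i) (hhi i)
  refine ⟨η, (pi_norm_le_iff_of_nonneg zero_le_one).2 fun i => hη i, ?_⟩
  ext i
  simp [mulVec_diagonal, hs i]

end Zonotope

theorem zonotope_reach_interval_general
    {n k : ℕ} (Δt : ℝ) (hΔt1 : Δt ≤ 1)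
    (p : ℝ → (Fin k → ℝ) → (Fin n → ℝ)) (m r : ℝ → Fin n → ℝ)
    (dtp m'0 : Fin n → ℝ) (Dl : Matrix (Fin n) (Fin k) ℝ)
    (Rlo Rhi : Fin n → ℝ)
    (hR : ∀ t ∈ Set.Icc (0 : ℝ) Δt, ∀ lam : Fin k → ℝ, ‖lam‖ ≤ 1 →
      ∀ ξ : Fin n → ℝ, ‖ξ‖ ≤ 1 → ∀ i,
        Rlo i ≤ p t lam i + m t i + (r t i / 2) * ξ i - p 0 0 i - m 0 i
                  - dtp i * t - m'0 i * t - Dl.mulVec lam i - (r 0 i / 2) * ξ i ∧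
        p t lam i + m t i + (r t i / 2) * ξ i - p 0 0 i - m 0 i
                  - dtp i * t - m'0 i * t - Dl.mulVec lam i - (r 0 i / 2) * ξ i ≤ Rhi i)
    (b : Fin n → ℝ)
    (hb : b = fun i => p 0 0 i + m 0 i + (Rlo i + Rhi i) / 2)
    (H : Matrix (Fin n) (Unit ⊕ (Fin k ⊕ (Fin n ⊕ Fin n))) ℝ)
    (hH : H = Matrix.of fun i j => Sum.elim (fun _ : Unit => dtp i + m'0 i)
      (Sum.elim (fun jk => Dl i jk)
        (Sum.elim (fun jn => if i = jn then r 0 i / 2 else 0)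
                  (fun jn => if i = jn then (Rhi i - Rlo i) / 2 else 0))) j) :
    ∀ t ∈ Set.Icc (0 : ℝ) Δt, ∀ lam : Fin k → ℝ, ‖lam‖ ≤ 1 →
      ∀ ξ : Fin n → ℝ, ‖ξ‖ ≤ 1 →
        ∃ μ : (Unit ⊕ (Fin k ⊕ (Fin n ⊕ Fin n))) → ℝ, ‖μ‖ ≤ 1 ∧
          (fun i => p t lam i + m t i + (r t i / 2) * ξ i) = b + H.mulVec μ := by
  intro t ht lam hlam ξ hξ
  have hH_fromCols : H = fromCols (replicateCol Unit (dtp + m'0)) (fromCols Dl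
      (fromCols (diagonal fun i => r 0 i / 2) (diagonal fun i => (Rhi i - Rlo i) / 2))) := by
    subst hH
    ext i (j | j | j | j) <;> simp [diagonal_apply]
  have hremainder := mem_zonotope_diagonal_of_mem_Icc (fun i => (hR t ht lam hlam ξ hξ i).1)
    (fun i => (hR t ht lam hlam ξ hξ i).2)
  have htime := add_smul_mem_zonotope_replicateCol (p 0 0 + m 0) (dtp + m'0)
    (abs_le.2 ⟨by linarith [ht.1], ht.2.trans hΔt1⟩)
  have hparam := add_mulVec_mem_zonotope 0 Dl hlam
  have hinit := add_mulVec_mem_zonotope 0 (diagonal fun i => r 0 i / 2) hξ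
  have hsum := add_mem_zonotope_fromCols htime
    (add_mem_zonotope_fromCols hparam (add_mem_zonotope_fromCols hinit hremainder))
  have hcenter : b = p 0 0 + m 0 + (0 + (0 + fun i => (Rlo i + Rhi i) / 2)) := by
    rw [hb]
    simp only [zero_add]
    rfl
  rw [hcenter, hH_fromCols]
  show _ ∈ zonotope _ _
  refine Set.mem_of_eq_of_mem ?_ hsum
  ext i
  simp [mulVec_diagonal]
  ring

/-- Zonotope enclosure of the whole Taylor-model reach-tube over [0,Δt]:
every point p(t,λ) + m(t) + ½·r(t)∘ξ with t ∈ [0,Δt], ‖λ‖∞ ≤ 1, ‖ξ‖∞ ≤ 1 lies in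
the zonotope with center b = p(0,0) + m(0) + mid[R⁻,R⁺] and generator matrix
H = [∂ₜp(0,0) + m′(0) | D_λp(0,0) | ½·diag(r(0)) | ½·diag(R⁺−R⁻)], where [R⁻,R⁺]
encloses the remainder of the joint linearization in (t,λ,ξ) at the origin. -/
theorem zonotope_reach_interval
    {n k : ℕ} (Δt : ℝ) (hΔt0 : 0 < Δt) (hΔt1 : Δt ≤ 1)
    (p : ℝ → (Fin k → ℝ) → (Fin n → ℝ)) (m r : ℝ → Fin n → ℝ)
    (dtp m'0 : Fin n → ℝ) (Dl : Matrix (Fin n) (Fin k) ℝ)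
    (hdtp : HasDerivAt (fun t => p t 0) dtp 0)
    (hDl : HasFDerivAt (fun lam => p 0 lam)
      (Matrix.mulVecLin Dl).toContinuousLinearMap 0)
    (hm : HasDerivAt m m'0 0)
    (Rlo Rhi : Fin n → ℝ)
    (hR : ∀ t ∈ Set.Icc (0 : ℝ) Δt, ∀ lam : Fin k → ℝ, ‖lam‖ ≤ 1 →
      ∀ ξ : Fin n → ℝ, ‖ξ‖ ≤ 1 → ∀ i,
        Rlo i ≤ p t lam i + m t i + (r t i / 2) * ξ i - p 0 0 i - m 0 i
                  - dtp i * t - m'0 i * t - Dl.mulVec lam i - (r 0 i / 2) * ξ i ∧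
        p t lam i + m t i + (r t i / 2) * ξ i - p 0 0 i - m 0 i
                  - dtp i * t - m'0 i * t - Dl.mulVec lam i - (r 0 i / 2) * ξ i ≤ Rhi i)
    (b : Fin n → ℝ)
    (hb : b = fun i => p 0 0 i + m 0 i + (Rlo i + Rhi i) / 2)
    (H : Matrix (Fin n) (Unit ⊕ (Fin k ⊕ (Fin n ⊕ Fin n))) ℝ)
    (hH : H = Matrix.of fun i j => Sum.elim (fun _ : Unit => dtp i + m'0 i)
      (Sum.elim (fun jk => Dl i jk)
        (Sum.elim (fun jn => if i = jn then r 0 i / 2 else 0)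
                  (fun jn => if i = jn then (Rhi i - Rlo i) / 2 else 0))) j) :
    ∀ t ∈ Set.Icc (0 : ℝ) Δt, ∀ lam : Fin k → ℝ, ‖lam‖ ≤ 1 →
      ∀ ξ : Fin n → ℝ, ‖ξ‖ ≤ 1 →
        ∃ μ : (Unit ⊕ (Fin k ⊕ (Fin n ⊕ Fin n))) → ℝ, ‖μ‖ ≤ 1 ∧
          (fun i => p t lam i + m t i + (r t i / 2) * ξ i) = b + H.mulVec μ :=
  zonotope_reach_interval_general Δt hΔt1 p m r dtp m'0 Dl Rlo Rhi hR b hb H hH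
end
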